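/- For every d > 0 and every λ < (π/d)² one has F_d^D(λ) < 0; in particular F_d^D((π/d)²) = 0 and F_d^D is strictly increasing on (-∞, (2π/d)²). -/

import Mathlib

/-- The set `Π_d^D = { (2πk/d)² : k ∈ ℕ, k ≥ 1 }`. -/
noncomputable def PiD (d : ℝ) : Set ℝ :=
  {x | ∃ k : ℕ, 1 ≤ k ∧ x = (2 * Real.pi * k / d) ^ 2}

/-- The function `F_d^D`. -/
noncomputable def FD (d lam : ℝ) : ℝ :=
  if 0 < lam then
    -2 * Real.sqrt lam * (Real.cos (d * Real.sqrt lam / 2) / Real.sin (d * Real.sqrt lam / 2))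
  else if lam = 0 then -4 / d
  else
    -2 * Real.sqrt (-lam) *
      (Real.cosh (d * Real.sqrt (-lam) / 2) / Real.sinh (d * Real.sqrt (-lam) / 2))

open Real Set

lemma sinlt : ∀ t ∈ Ioo (0:ℝ) π, t * Real.cos t < Real.sin t := by
  have hmono : StrictMonoOn (fun x : ℝ => Real.sin x - x * Real.cos x) (Icc 0 π) := by
    apply strictMonoOn_of_deriv_pos (convex_Icc 0 π)
    · exact (Real.continuous_sin.sub (continuous_id.mul Real.continuous_cos)).continuousOn
    · intro x hx
      rw [interior_Icc] at hx
      have h1 : HasDerivAt (fun x : ℝ => Real.sin x - x * Real.cos x) (x * Real.sin x) x := by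
        have := (Real.hasDerivAt_sin x).sub (((hasDerivAt_id x).mul (Real.hasDerivAt_cos x)))
        exact this.congr_deriv (by simp [id_eq])
      rw [h1.deriv]
      exact mul_pos hx.1 (Real.sin_pos_of_pos_of_lt_pi hx.1 hx.2)
  intro t ht
  have := hmono (left_mem_Icc.2 Real.pi_pos.le) ⟨ht.1.le, ht.2.le⟩ ht.1
  simpa using this

lemma sinhlt : ∀ s : ℝ, 0 < s → Real.sinh s < s * Real.cosh s := by
  have hmono : StrictMonoOn (fun x : ℝ => x * Real.cosh x - Real.sinh x) (Ici 0) := by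
    apply strictMonoOn_of_deriv_pos (convex_Ici 0)
    · exact ((continuous_id.mul Real.continuous_cosh).sub Real.continuous_sinh).continuousOn
    · intro x hx
      rw [interior_Ici] at hx
      have h1 : HasDerivAt (fun x : ℝ => x * Real.cosh x - Real.sinh x) (x * Real.sinh x) x := by
        have := ((hasDerivAt_id x).mul (Real.hasDerivAt_cosh x)).sub (Real.hasDerivAt_sinh x)
        exact this.congr_deriv (by simp [id_eq])
      rw [h1.deriv]
      exact mul_pos hx (Real.sinh_pos_iff.2 hx)
  intro s hs
  have := hmono (self_mem_Ici) (le_of_lt hs) hs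
  simpa using this

lemma gAnti : StrictAntiOn (fun t : ℝ => t * Real.cos t / Real.sin t) (Ioo 0 π) := by
  apply strictAntiOn_of_deriv_neg (convex_Ioo 0 π)
  · apply ContinuousOn.div
    · exact (continuous_id.mul Real.continuous_cos).continuousOn
    · exact Real.continuous_sin.continuousOn
    · exact fun x hx => (Real.sin_pos_of_pos_of_lt_pi hx.1 hx.2).ne'
  · intro x hx
    rw [interior_Ioo] at hx
    have hsin : Real.sin x ≠ 0 := (Real.sin_pos_of_pos_of_lt_pi hx.1 hx.2).ne'
    have h1 : HasDerivAt (fun t : ℝ => t * Real.cos t / Real.sin t)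
        (((1 * Real.cos x + x * -Real.sin x) * Real.sin x - x * Real.cos x * Real.cos x) /
          Real.sin x ^ 2) x := by
      have := ((hasDerivAt_id x).mul (Real.hasDerivAt_cos x)).div (Real.hasDerivAt_sin x) hsin
      exact this
    rw [h1.deriv]
    apply div_neg_of_neg_of_pos
    · have hx2 : Real.sin x * Real.cos x < x := by
        have := Real.sin_lt (by linarith [hx.1] : (0:ℝ) < 2 * x)
        rw [Real.sin_two_mul] at this; linarith
      have heq : (1 * Real.cos x + x * -Real.sin x) * Real.sin x - x * Real.cos x * Real.cos x
          = Real.sin x * Real.cos x - x := by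
        linear_combination (-x) * Real.sin_sq_add_cos_sq x
      rw [heq]; linarith
    · positivity

lemma hMono : StrictMonoOn (fun s : ℝ => s * Real.cosh s / Real.sinh s) (Ioi 0) := by
  apply strictMonoOn_of_deriv_pos (convex_Ioi 0)
  · apply ContinuousOn.div
    · exact (continuous_id.mul Real.continuous_cosh).continuousOn
    · exact Real.continuous_sinh.continuousOn
    · exact fun x hx => (Real.sinh_pos_iff.2 hx).ne'
  · intro x hx
    rw [interior_Ioi, mem_Ioi] at hx
    have hsinh : Real.sinh x ≠ 0 := (Real.sinh_pos_iff.2 hx).ne'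
    have h1 : HasDerivAt (fun s : ℝ => s * Real.cosh s / Real.sinh s)
        (((1 * Real.cosh x + x * Real.sinh x) * Real.sinh x - x * Real.cosh x * Real.cosh x) /
          Real.sinh x ^ 2) x := by
      have := ((hasDerivAt_id x).mul (Real.hasDerivAt_cosh x)).div (Real.hasDerivAt_sinh x) hsinh
      exact this
    rw [h1.deriv]
    apply div_pos
    · have hx2 : x < Real.sinh x * Real.cosh x := by
        have := Real.self_lt_sinh_iff.2 (by linarith : (0:ℝ) < 2 * x)
        rw [Real.sinh_two_mul] at this; linarith
      have heq : (1 * Real.cosh x + x * Real.sinh x) * Real.sinh x - x * Real.cosh x * Real.cosh x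
          = Real.sinh x * Real.cosh x - x := by
        linear_combination (-x) * Real.cosh_sq x
      rw [heq]; linarith
    · positivity

/-- For every `d > 0` and every `λ < (π/d)²` one has `F_d^D(λ) < 0`; in particular
`F_d^D((π/d)²) = 0` and `F_d^D` is strictly increasing on `(-∞, (2π/d)²)`. -/
theorem stmt9 (d : ℝ) (hd : 0 < d) :
    (∀ lam : ℝ, lam < (Real.pi / d) ^ 2 → FD d lam < 0) ∧
    FD d ((Real.pi / d) ^ 2) = 0 ∧
    StrictMonoOn (FD d) (Set.Iio ((2 * Real.pi / d) ^ 2)) := by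
  have hπ := Real.pi_pos
  have hd' : d ≠ 0 := hd.ne'
  -- rewriting lemmas
  have FDpos : ∀ lam : ℝ, 0 < lam → FD d lam =
      -(4/d) * ((d * Real.sqrt lam / 2) * Real.cos (d * Real.sqrt lam / 2) /
        Real.sin (d * Real.sqrt lam / 2)) := by
    intro lam hl
    have h2 : (-2:ℝ) * Real.sqrt lam = -(4/d) * (d * Real.sqrt lam / 2) := by
      field_simp; ring
    rw [FD, if_pos hl, h2]; ring
  have FDneg : ∀ lam : ℝ, lam < 0 → FD d lam =
      -(4/d) * ((d * Real.sqrt (-lam) / 2) * Real.cosh (d * Real.sqrt (-lam) / 2) /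
        Real.sinh (d * Real.sqrt (-lam) / 2)) := by
    intro lam hl
    have h2 : (-2:ℝ) * Real.sqrt (-lam) = -(4/d) * (d * Real.sqrt (-lam) / 2) := by
      field_simp; ring
    rw [FD, if_neg (by linarith), if_neg hl.ne, h2]; ring
  have FDzero : FD d 0 = -4 / d := by
    rw [FD, if_neg (lt_irrefl 0), if_pos rfl]
  have hcoef : -(4/d) < 0 := by
    have : (0:ℝ) < 4/d := by positivity
    linarith
  -- t membership
  have tmem : ∀ lam : ℝ, 0 < lam → lam < (2 * π / d) ^ 2 →
      d * Real.sqrt lam / 2 ∈ Ioo (0:ℝ) π := by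
    intro lam h1 h2
    have hs : 0 < Real.sqrt lam := Real.sqrt_pos.2 h1
    have hlt : Real.sqrt lam < 2 * π / d := by
      have := Real.sqrt_lt_sqrt h1.le h2
      rwa [Real.sqrt_sq (by positivity)] at this
    refine ⟨by positivity, ?_⟩
    have hmul := mul_lt_mul_of_pos_left hlt hd
    have heq : d * (2 * π / d) = 2 * π := by field_simp
    linarith
  -- h s > 1 for s > 0
  have hgt1 : ∀ s : ℝ, 0 < s → 1 < s * Real.cosh s / Real.sinh s := by
    intro s hs
    rw [lt_div_iff₀ (Real.sinh_pos_iff.2 hs), one_mul]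
    exact sinhlt s hs
  -- g t < 1 on Ioo 0 π
  have glt1 : ∀ t ∈ Ioo (0:ℝ) π, t * Real.cos t / Real.sin t < 1 := by
    intro t ht
    rw [div_lt_one (Real.sin_pos_of_pos_of_lt_pi ht.1 ht.2)]
    exact sinlt t ht
  refine ⟨?_, ?_, ?_⟩
  · -- part 1
    intro lam hlam
    rcases lt_trichotomy lam 0 with h | h | h
    · rw [FD, if_neg (by linarith), if_neg h.ne]
      have h1 : 0 < Real.sqrt (-lam) := Real.sqrt_pos.2 (by linarith)
      have hs : 0 < Real.sinh (d * Real.sqrt (-lam) / 2) := Real.sinh_pos_iff.2 (by positivity)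
      have hc : 0 < Real.cosh (d * Real.sqrt (-lam) / 2) := Real.cosh_pos _
      have := div_pos hc hs
      nlinarith
    · rw [h, FDzero]
      have h1 : (0:ℝ) < 4 / d := by positivity
      have h2 : (-4:ℝ) / d = -(4/d) := by ring
      linarith
    · rw [FD, if_pos h]
      have hs : 0 < Real.sqrt lam := Real.sqrt_pos.2 h
      have hlt : Real.sqrt lam < π / d := by
        have := Real.sqrt_lt_sqrt h.le hlam
        rwa [Real.sqrt_sq (by positivity)] at this
      have ht2 : d * Real.sqrt lam / 2 < π / 2 := by
        have : d * Real.sqrt lam < d * (π / d) := by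
          exact mul_lt_mul_of_pos_left hlt hd
        rw [mul_div_cancel₀ _ hd'] at this
        linarith
      have ht1 : 0 < d * Real.sqrt lam / 2 := by positivity
      have hcos : 0 < Real.cos (d * Real.sqrt lam / 2) :=
        Real.cos_pos_of_mem_Ioo ⟨by linarith, ht2⟩
      have hsin : 0 < Real.sin (d * Real.sqrt lam / 2) :=
        Real.sin_pos_of_pos_of_lt_pi ht1 (by linarith)
      have := div_pos hcos hsin
      nlinarith
  · -- part 2
    have h0 : (0:ℝ) < (π / d) ^ 2 := by positivity
    rw [FD, if_pos h0, Real.sqrt_sq (by positivity : (0:ℝ) ≤ π / d)]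
    have : d * (π / d) / 2 = π / 2 := by field_simp
    rw [this, Real.cos_pi_div_two]
    simp
  · -- part 3
    intro a ha b hb hab
    simp only [mem_Iio] at ha hb
    rcases lt_trichotomy b 0 with hb0 | hb0 | hb0
    · -- a < b < 0
      have ha0 : a < 0 := by linarith
      rw [FDneg a ha0, FDneg b hb0]
      have hsb : 0 < Real.sqrt (-b) ∨ True := Or.inr trivial
      have hsab : Real.sqrt (-b) < Real.sqrt (-a) :=
        Real.sqrt_lt_sqrt (by linarith) (by linarith)
      have h1 : (0:ℝ) < d * Real.sqrt (-b) / 2 := by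
        have : 0 < Real.sqrt (-b) := Real.sqrt_pos.2 (by linarith)
        positivity
      have h2 : d * Real.sqrt (-b) / 2 < d * Real.sqrt (-a) / 2 := by
        have := mul_lt_mul_of_pos_left hsab hd
        linarith
      have := hMono (mem_Ioi.2 h1) (mem_Ioi.2 (by linarith)) h2
      exact mul_lt_mul_of_neg_left this hcoef
    · -- a < b = 0
      subst hb0
      rw [FDzero, FDneg a hab]
      have hsa : 0 < Real.sqrt (-a) := Real.sqrt_pos.2 (by linarith)
      have h1 : (0:ℝ) < d * Real.sqrt (-a) / 2 := by positivity
      have := hgt1 _ h1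
      have h2 : -4 / d = -(4/d) * 1 := by ring
      rw [h2]
      exact mul_lt_mul_of_neg_left this hcoef
    · -- 0 < b
      have htb : d * Real.sqrt b / 2 ∈ Ioo (0:ℝ) π := tmem b hb0 hb
      have hFDb : -(4/d) * 1 < FD d b := by
        rw [FDpos b hb0]
        exact mul_lt_mul_of_neg_left (glt1 _ htb) hcoef
      rcases lt_trichotomy a 0 with ha0 | ha0 | ha0
      · -- a < 0 < b
        rw [FDneg a ha0]
        have hsa : 0 < Real.sqrt (-a) := Real.sqrt_pos.2 (by linarith)
        have h1 : (0:ℝ) < d * Real.sqrt (-a) / 2 := by positivity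
        have := mul_lt_mul_of_neg_left (hgt1 _ h1) hcoef
        linarith
      · subst ha0
        rw [FDzero]
        have : (-4:ℝ) / d = -(4/d) * 1 := by ring
        linarith [hFDb, this.le]
      · -- 0 < a < b
        have hta : d * Real.sqrt a / 2 ∈ Ioo (0:ℝ) π := tmem a ha0 (by linarith)
        rw [FDpos a ha0, FDpos b hb0]
        have hs : Real.sqrt a < Real.sqrt b := Real.sqrt_lt_sqrt ha0.le hab
        have h2 : d * Real.sqrt a / 2 < d * Real.sqrt b / 2 := by
          have := mul_lt_mul_of_pos_left hs hd
          linarith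
        exact mul_lt_mul_of_neg_left (gAnti hta htb h2) hcoef
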